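/- Let λ₀(s) denote the smallest eigenvalue of G(s) = L + (s/(1−s))W on the complete graph with V vertices, with W diagonal, W_m = 0 the unique smallest eigenvalue, W positive semidefinite, and second smallest eigenvalue W_{u₁}. Then g(s) := V − λ₀(s) − 1 satisfies dg/ds ≤ −W_{u₁}·(1 − φ(m)²)/(1−s)², where φ is the unit ground state of G(s). In particular, g(s) is strictly decreasing on [0,1). -/

import Mathlib

open Matrix Filter Topology

/-!
On the complete graph the eigenvalue equation of `L + c • W` reads `(V + c W_u - λ) x_u = ∑_v x_v`,
and the test vector `e_u` gives `λ₀(c) ≤ V - 1 + c W_u`. Hence every ground state is proportional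
to `u ↦ (V + c W_u - λ₀(c))⁻¹`, so `⟨φ, W φ⟩` is the same for all of them and depends continuously
on `c`. By the variational principle `⟨φ_c, W φ_c⟩` is a supergradient of `λ₀` at `c`, and a
supergradient that is continuous in the point is the derivative (Hellmann–Feynman). The bound then
follows from `W_m = 0` and `W_u ≥ W_{u₁}` for `u ≠ m`, with the chain rule for `c = s / (1 - s)`;
monotonicity follows from `⟨φ, W φ⟩ > 0`.
-/

/-- The smallest eigenvalue of a Hermitian matrix. -/
noncomputable def lamMin {n : ℕ} {A : Matrix (Fin n) (Fin n) ℝ}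
    (hA : A.IsHermitian) : ℝ :=
  ⨅ i, hA.eigenvalues i

/-- The combinatorial Laplacian of the complete graph on `V` vertices:
`L = V·I − J`, where `J` is the all-ones matrix. -/
def cgL (V : ℕ) : Matrix (Fin V) (Fin V) ℝ :=
  (V : ℝ) • (1 : Matrix (Fin V) (Fin V) ℝ) - Matrix.of (fun _ _ => (1 : ℝ))

/-- The rescaled interpolating Hamiltonian `G(s) = L + (s/(1−s))·W`. -/
noncomputable def cgG (V : ℕ) (W : Fin V → ℝ) (s : ℝ) : Matrix (Fin V) (Fin V) ℝ :=
  cgL V + (s / (1 - s)) • Matrix.diagonal W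

/-- The second smallest value of `W`, i.e. the smallest value away from `m`. -/
noncomputable def secondMin {V : ℕ} (hV : 2 ≤ V) (W : Fin V → ℝ) (m : Fin V) : ℝ :=
  (Finset.univ.erase m).inf'
    (by
      rw [Finset.erase_nonempty (Finset.mem_univ m)]
      refine Finset.one_lt_card_iff_nontrivial.mp ?_
      rw [Finset.card_univ, Fintype.card_fin]
      omega) W

section Variational

variable {n : ℕ} {A B : Matrix (Fin n) (Fin n) ℝ}

lemma lamMin_le_eigenvalues (hA : A.IsHermitian) (i : Fin n) : lamMin hA ≤ hA.eigenvalues i :=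
  ciInf_le (Set.finite_range _).bddBelow i

lemma exists_dotProduct_mulVec_eq_sum_eigenvalues (hA : A.IsHermitian) (x : Fin n → ℝ) :
    ∃ y : Fin n → ℝ, x ⬝ᵥ A *ᵥ x = ∑ i, hA.eigenvalues i * (y i * y i) ∧ y ⬝ᵥ y = x ⬝ᵥ x := by
  set U : Matrix (Fin n) (Fin n) ℝ := (hA.eigenvectorUnitary : Matrix (Fin n) (Fin n) ℝ)
  have hUU : U * Uᵀ = 1 := by
    simpa [star_eq_conjTranspose] using Unitary.mul_star_self_of_mem hA.eigenvectorUnitary.2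
  have hA' : A = U * diagonal hA.eigenvalues * Uᵀ := by
    simpa [star_eq_conjTranspose] using hA.spectral_theorem
  refine ⟨Uᵀ *ᵥ x, ?_, ?_⟩
  · conv_lhs => rw [hA', ← mulVec_mulVec, ← mulVec_mulVec, dotProduct_mulVec,
      ← mulVec_transpose]
    simp [dotProduct, mulVec_diagonal, mul_left_comm]
  · rw [dotProduct_mulVec, ← mulVec_transpose, transpose_transpose, mulVec_mulVec, hUU,
      one_mulVec]

lemma lamMin_le_dotProduct_mulVec (hA : A.IsHermitian) {x : Fin n → ℝ} (hx : x ⬝ᵥ x = 1) :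
    lamMin hA ≤ x ⬝ᵥ A *ᵥ x := by
  obtain ⟨y, hxy, hy⟩ := exists_dotProduct_mulVec_eq_sum_eigenvalues hA x
  calc lamMin hA = ∑ i, lamMin hA * (y i * y i) := by
        rw [← Finset.mul_sum, ← dotProduct, hy, hx, mul_one]
    _ ≤ x ⬝ᵥ A *ᵥ x := by
        rw [hxy]
        gcongr with i
        · exact mul_self_nonneg _
        · exact lamMin_le_eigenvalues hA i

lemma exists_mulVec_eq_lamMin_smul [NeZero n] (hA : A.IsHermitian) :
    ∃ x : Fin n → ℝ, x ⬝ᵥ x = 1 ∧ A *ᵥ x = lamMin hA • x := by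
  obtain ⟨i, -, hi⟩ := Finset.univ.exists_min_image hA.eigenvalues Finset.univ_nonempty
  have hmin : lamMin hA = hA.eigenvalues i :=
    le_antisymm (lamMin_le_eigenvalues hA i) (le_ciInf fun j => hi j (Finset.mem_univ j))
  refine ⟨hA.eigenvectorBasis i, ?_, hmin ▸ hA.mulVec_eigenvectorBasis i⟩
  have := EuclideanSpace.inner_eq_star_dotProduct (hA.eigenvectorBasis i) (hA.eigenvectorBasis i)
  simpa [hA.eigenvectorBasis.orthonormal.1 i] using this.symm

lemma lamMin_le_lamMin_add (hA : A.IsHermitian) (hB : B.IsHermitian) {x : Fin n → ℝ}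
    (hx : x ⬝ᵥ x = 1) (hAx : A *ᵥ x = lamMin hA • x) :
    lamMin hB ≤ lamMin hA + x ⬝ᵥ (B - A) *ᵥ x := by
  calc lamMin hB ≤ x ⬝ᵥ B *ᵥ x := lamMin_le_dotProduct_mulVec hB hx
    _ = x ⬝ᵥ A *ᵥ x + x ⬝ᵥ (B - A) *ᵥ x := by rw [sub_mulVec, dotProduct_sub]; ring
    _ = lamMin hA + x ⬝ᵥ (B - A) *ᵥ x := by rw [hAx, dotProduct_smul, hx, smul_eq_mul, mul_one]

end Variational

section Supergradient

variable {f g : ℝ → ℝ}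

lemma lipschitzWith_of_le_add_mul {K : ℝ} (hf : ∀ x y, f y ≤ f x + (y - x) * g x)
    (hg : ∀ x, |g x| ≤ K) : LipschitzWith K.toNNReal f := by
  refine LipschitzWith.of_dist_le' fun x y => ?_
  have hx := abs_le.mp (hg x)
  have hy := abs_le.mp (hg y)
  rw [Real.dist_eq, Real.dist_eq, abs_le]
  constructor <;> cases abs_cases (x - y) <;> nlinarith [hf x y, hf y x]

lemma hasDerivAt_of_le_add_mul (hf : ∀ x y, f y ≤ f x + (y - x) * g x) {x : ℝ}
    (hg : ContinuousAt g x) : HasDerivAt f (g x) x := by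
  rw [hasDerivAt_iff_isLittleO]
  have hsmall : (fun y => (g y - g x) * (y - x)) =o[𝓝 x] fun y => y - x := by
    have hg0 : (fun y => g y - g x) =o[𝓝 x] fun _ => (1 : ℝ) :=
      (Asymptotics.isLittleO_one_iff ℝ).mpr (tendsto_sub_nhds_zero_iff.mpr hg)
    simpa using hg0.mul_isBigO (Asymptotics.isBigO_refl (fun y => y - x) (𝓝 x))
  refine (Asymptotics.IsBigO.of_bound 1 (Eventually.of_forall fun y => ?_)).trans_isLittleO hsmall
  have hbound : |f y - f x - (y - x) * g x| ≤ |(g y - g x) * (y - x)| := by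
    rw [abs_le]
    constructor
    · linarith [hf y x, neg_abs_le ((g y - g x) * (y - x))]
    · linarith [hf x y, abs_nonneg ((g y - g x) * (y - x))]
  simpa using hbound

lemma strictMono_of_le_add_mul (hf : ∀ x y, f y ≤ f x + (y - x) * g x) (hg : ∀ x, 0 < g x) :
    StrictMono f := fun x y hxy => by
  nlinarith [hf y x, hg y]

end Supergradient

section CompleteGraph

variable {V : ℕ} {W : Fin V → ℝ}

/-- `cgG V W s` is `cgH V W (s / (1 - s))` by definition. -/
def cgH (V : ℕ) (W : Fin V → ℝ) (c : ℝ) : Matrix (Fin V) (Fin V) ℝ :=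
  cgL V + c • diagonal W

lemma cgH_isHermitian (V : ℕ) (W : Fin V → ℝ) (c : ℝ) : (cgH V W c).IsHermitian := by
  ext i j
  by_cases h : i = j <;> simp [cgH, cgL, one_apply, h, eq_comm]

noncomputable def groundEnergy (V : ℕ) (W : Fin V → ℝ) (c : ℝ) : ℝ :=
  lamMin (cgH_isHermitian V W c)

lemma cgH_mulVec_apply (c : ℝ) (x : Fin V → ℝ) (u : Fin V) :
    (cgH V W c *ᵥ x) u = (V + c * W u) * x u - ∑ v, x v := by
  simp only [cgH, cgL, add_mulVec, sub_mulVec, smul_mulVec, one_mulVec, Pi.add_apply, Pi.sub_apply,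
    Pi.smul_apply, mulVec_diagonal, smul_eq_mul]
  simp [mulVec, dotProduct]
  ring

lemma groundEnergy_le (c : ℝ) (u : Fin V) : groundEnergy V W c ≤ V - 1 + c * W u := by
  have h := lamMin_le_dotProduct_mulVec (cgH_isHermitian V W c) (x := Pi.single u 1)
    (by simp)
  rw [single_dotProduct, one_mul, cgH_mulVec_apply] at h
  simp only [Pi.single_eq_same, mul_one, Finset.sum_pi_single', Finset.mem_univ, if_true] at h
  exact h.trans_eq (by ring)

/-- The ground state of `cgH V W c`, up to normalisation. -/
noncomputable def groundState (V : ℕ) (W : Fin V → ℝ) (c : ℝ) (u : Fin V) : ℝ :=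
  (V + c * W u - groundEnergy V W c)⁻¹

lemma groundState_pos (c : ℝ) (u : Fin V) : 0 < groundState V W c u :=
  inv_pos.mpr (by linarith [groundEnergy_le (W := W) c u])

lemma eq_mul_groundState {c : ℝ} {x : Fin V → ℝ}
    (hx : cgH V W c *ᵥ x = groundEnergy V W c • x) (u : Fin V) :
    x u = (∑ v, x v) * groundState V W c u := by
  have h := congrFun hx u
  have hd : V + c * W u - groundEnergy V W c ≠ 0 := (inv_pos.mp (groundState_pos c u)).ne'
  rw [cgH_mulVec_apply, Pi.smul_apply, smul_eq_mul] at h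
  rw [groundState, eq_mul_inv_iff_mul_eq₀ hd]
  linear_combination h

noncomputable def energySlope (V : ℕ) (W : Fin V → ℝ) (c : ℝ) : ℝ :=
  (∑ u, W u * groundState V W c u ^ 2) / ∑ u, groundState V W c u ^ 2

lemma sum_mul_sq_eq_energySlope {c : ℝ} {x : Fin V → ℝ} (hnorm : x ⬝ᵥ x = 1)
    (hx : cgH V W c *ᵥ x = groundEnergy V W c • x) :
    ∑ u, W u * x u ^ 2 = energySlope V W c := by
  set S := ∑ v, x v
  have hnorm' : S ^ 2 * ∑ u, groundState V W c u ^ 2 = 1 := by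
    rw [← hnorm, dotProduct, Finset.mul_sum]
    exact Finset.sum_congr rfl fun u _ => by rw [eq_mul_groundState hx u]; ring
  have hW : ∑ u, W u * x u ^ 2 = S ^ 2 * ∑ u, W u * groundState V W c u ^ 2 := by
    rw [Finset.mul_sum]
    exact Finset.sum_congr rfl fun u _ => by rw [eq_mul_groundState hx u]; ring
  rw [energySlope, eq_div_iff (right_ne_zero_of_mul_eq_one hnorm'), hW]
  linear_combination (∑ u, W u * groundState V W c u ^ 2) * hnorm'

lemma groundEnergy_le_add_mul_energySlope [NeZero V] (c c' : ℝ) :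
    groundEnergy V W c' ≤ groundEnergy V W c + (c' - c) * energySlope V W c := by
  obtain ⟨x, hx, hAx⟩ := exists_mulVec_eq_lamMin_smul (cgH_isHermitian V W c)
  have h := lamMin_le_lamMin_add (cgH_isHermitian V W c) (cgH_isHermitian V W c') hx hAx
  have hdiff : cgH V W c' - cgH V W c = (c' - c) • diagonal W := by
    simp [cgH, sub_smul]
  have hquad : x ⬝ᵥ diagonal W *ᵥ x = ∑ u, W u * x u ^ 2 := by
    simp only [dotProduct, mulVec_diagonal]
    exact Finset.sum_congr rfl fun u _ => by ring
  rwa [hdiff, smul_mulVec, dotProduct_smul, smul_eq_mul, hquad,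
    sum_mul_sq_eq_energySlope hx hAx] at h

lemma abs_energySlope_le (c : ℝ) : |energySlope V W c| ≤ ∑ u, |W u| := by
  set w := groundState V W c
  have hnonneg : 0 ≤ ∑ u, w u ^ 2 := Finset.sum_nonneg fun u _ => sq_nonneg (w u)
  rw [energySlope, abs_div, abs_of_nonneg hnonneg]
  refine div_le_of_le_mul₀ hnonneg (Finset.sum_nonneg fun u _ => abs_nonneg (W u)) ?_
  rw [Finset.sum_mul]
  refine (Finset.abs_sum_le_sum_abs _ _).trans (Finset.sum_le_sum fun u _ => ?_)
  rw [abs_mul, abs_of_nonneg (sq_nonneg (w u))]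
  exact mul_le_mul_of_nonneg_left
    (Finset.single_le_sum (fun v _ => sq_nonneg (w v)) (Finset.mem_univ u)) (abs_nonneg _)

lemma continuous_groundEnergy [NeZero V] : Continuous (groundEnergy V W) :=
  (lipschitzWith_of_le_add_mul groundEnergy_le_add_mul_energySlope abs_energySlope_le).continuous

lemma continuous_energySlope [NeZero V] : Continuous (energySlope V W) := by
  have hE : Continuous (groundEnergy V W) := continuous_groundEnergy
  have hw : ∀ u, Continuous fun c => groundState V W c u := fun u =>
    (by fun_prop : Continuous fun c => V + c * W u - groundEnergy V W c).inv₀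
      fun c => (inv_pos.mp (groundState_pos c u)).ne'
  exact (continuous_finsetSum _ fun u _ => continuous_const.mul ((hw u).pow 2)).div
    (continuous_finsetSum _ fun u _ => (hw u).pow 2) fun c =>
      (Finset.sum_pos (fun u _ => pow_pos (groundState_pos c u) 2) Finset.univ_nonempty).ne'

lemma hasDerivAt_groundEnergy [NeZero V] (c : ℝ) :
    HasDerivAt (groundEnergy V W) (energySlope V W c) c :=
  hasDerivAt_of_le_add_mul groundEnergy_le_add_mul_energySlope
    continuous_energySlope.continuousAt

lemma energySlope_pos (hW : ∀ u, 0 ≤ W u) {u : Fin V} (hu : 0 < W u) (c : ℝ) :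
    0 < energySlope V W c := by
  have hw := groundState_pos (W := W) c u
  refine div_pos (Finset.sum_pos' (fun v _ => mul_nonneg (hW v) (sq_nonneg _))
    ⟨u, Finset.mem_univ u, by positivity⟩) (Finset.sum_pos (fun v _ => ?_) ⟨u, Finset.mem_univ u⟩)
  exact pow_pos (groundState_pos c v) 2

lemma strictMono_groundEnergy [NeZero V] (hW : ∀ u, 0 ≤ W u) {u : Fin V} (hu : 0 < W u) :
    StrictMono (groundEnergy V W) :=
  strictMono_of_le_add_mul groundEnergy_le_add_mul_energySlope (energySlope_pos hW hu)

end CompleteGraph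

section Reparametrization

lemma hasDerivAt_div_one_sub {s : ℝ} (hs : s ≠ 1) :
    HasDerivAt (fun t => t / (1 - t)) ((1 - s) ^ 2)⁻¹ s := by
  refine ((hasDerivAt_id' s).fun_div ((hasDerivAt_const s 1).fun_sub (hasDerivAt_id' s))
    (sub_ne_zero.mpr hs.symm)).congr_deriv ?_
  rw [inv_eq_one_div]
  ring

lemma strictMonoOn_div_one_sub : StrictMonoOn (fun t : ℝ => t / (1 - t)) (Set.Iio 1) := by
  intro t ht t' ht' htt
  have h1 : 0 < 1 - t := sub_pos.mpr ht
  have h2 : 0 < 1 - t' := sub_pos.mpr ht'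
  rw [div_lt_div_iff₀ h1 h2]
  nlinarith

end Reparametrization

lemma secondMin_mul_le_sum {V : ℕ} (hV : 2 ≤ V) {W : Fin V → ℝ} {m : Fin V} (hWm : W m = 0)
    {x : Fin V → ℝ} (hx : x ⬝ᵥ x = 1) :
    secondMin hV W m * (1 - x m ^ 2) ≤ ∑ u, W u * x u ^ 2 := by
  have hmass : 1 - x m ^ 2 = ∑ u ∈ Finset.univ.erase m, x u ^ 2 := by
    rw [← hx, dotProduct, ← Finset.add_sum_erase _ _ (Finset.mem_univ m)]
    simp only [sq, add_sub_cancel_left]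
  rw [hmass, Finset.mul_sum, ← Finset.add_sum_erase _ _ (Finset.mem_univ m), hWm, zero_mul,
    zero_add]
  exact Finset.sum_le_sum fun u hu =>
    mul_le_mul_of_nonneg_right (Finset.inf'_le W hu) (sq_nonneg _)

theorem g_derivative_bound_general {V : ℕ} (hV : 2 ≤ V) (W : Fin V → ℝ) (m : Fin V)
    (hWm : W m = 0) (hmin : ∀ u : Fin V, u ≠ m → 0 < W u)
    (hG : ∀ t : ℝ, (cgG V W t).IsHermitian)
    (s : ℝ) (hs : s ∈ Set.Ico (0 : ℝ) 1)
    (φ : Fin V → ℝ) (hnorm : ∑ u : Fin V, (φ u) ^ 2 = 1)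
    (hEig : (cgG V W s).mulVec φ = lamMin (hG s) • φ) :
    (∃ d : ℝ, HasDerivAt (fun t : ℝ => (V : ℝ) - lamMin (hG t) - 1) d s ∧
        d ≤ -(secondMin hV W m) * (1 - (φ m) ^ 2) / (1 - s) ^ 2) ∧
      StrictAntiOn (fun t : ℝ => (V : ℝ) - lamMin (hG t) - 1) (Set.Ico (0 : ℝ) 1) := by
  have : NeZero V := ⟨by omega⟩
  have hW : ∀ u, 0 ≤ W u := fun u =>
    (eq_or_ne u m).elim (fun h => h ▸ hWm.ge) fun h => (hmin u h).le
  obtain ⟨v, hv⟩ := Fintype.exists_ne_of_one_lt_card (by simp; omega) m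
  have hφ : φ ⬝ᵥ φ = 1 := by simpa [dotProduct, sq] using hnorm
  have hslope : ∑ u, W u * φ u ^ 2 = energySlope V W (s / (1 - s)) :=
    sum_mul_sq_eq_energySlope hφ hEig
  have hderiv := (((hasDerivAt_groundEnergy (W := W) _).comp s
    (hasDerivAt_div_one_sub hs.2.ne)).const_sub (V : ℝ)).sub_const 1
  refine ⟨⟨_, hderiv, ?_⟩, fun t ht t' ht' htt => ?_⟩
  · rw [← hslope, neg_mul, neg_div, neg_le_neg_iff, div_eq_mul_inv]
    exact mul_le_mul_of_nonneg_right (secondMin_mul_le_sum hV hWm hφ) (by positivity)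
  · have := strictMono_groundEnergy hW (hmin v hv) (strictMonoOn_div_one_sub ht.2 ht'.2 htt)
    exact sub_lt_sub_right (sub_lt_sub_left this _) _

/-- For `g(s) = V − λ₀(G(s)) − 1` on the complete graph, with `W`
diagonal positive semidefinite, `W m = 0` its unique smallest eigenvalue, and `φ` the
unit positive ground state of `G(s)`, the derivative satisfies
`dg/ds ≤ −W_{u₁}(1 − φ(m)²)/(1−s)²`; in particular `g` is strictly decreasing on
`[0,1)`. -/
theorem g_derivative_bound {V : ℕ} (hV : 2 ≤ V) (W : Fin V → ℝ) (m : Fin V)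
    (hWm : W m = 0) (hmin : ∀ u : Fin V, u ≠ m → 0 < W u)
    (hG : ∀ t : ℝ, (cgG V W t).IsHermitian)
    (s : ℝ) (hs : s ∈ Set.Ico (0 : ℝ) 1)
    (φ : Fin V → ℝ) (hpos : ∀ u, 0 < φ u) (hnorm : ∑ u : Fin V, (φ u) ^ 2 = 1)
    (hEig : (cgG V W s).mulVec φ = lamMin (hG s) • φ) :
    (∃ d : ℝ, HasDerivAt (fun t : ℝ => (V : ℝ) - lamMin (hG t) - 1) d s ∧
        d ≤ -(secondMin hV W m) * (1 - (φ m) ^ 2) / (1 - s) ^ 2) ∧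
      StrictAntiOn (fun t : ℝ => (V : ℝ) - lamMin (hG t) - 1) (Set.Ico (0 : ℝ) 1) :=
  g_derivative_bound_general hV W m hWm hmin hG s hs φ hnorm hEig
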